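/- arXiv:2209.02211 — 3 statements merged into one kernel-verified Lean document; each statement's English description precedes it below -/
import Mathlib

section
/- For r ∈ [1,2] and any y ∈ (0, (r/e)^r], if x = c_r · log^r(1/y)/y with c_r = 15 (sufficient for all r ∈ [1,2]), then log^r(x)/x ≤ y. -/
open Real

set_option maxHeartbeats 1000000 in
/-- For `r ∈ [1,2]` and `y ∈ (0, (r/e)^r]`, if `x = 15 · (log(1/y))^r / y`
then `(log x)^r / x ≤ y`. -/
theorem stmt_0 (r y x : ℝ) (hr1 : 1 ≤ r) (hr2 : r ≤ 2)
    (hy0 : 0 < y) (hy : y ≤ (r / Real.exp 1) ^ r)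
    (hx : x = 15 * (Real.log (1 / y)) ^ r / y) :
    (Real.log x) ^ r / x ≤ y := by
  have hr0 : (0:ℝ) < r := lt_of_lt_of_le one_pos hr1
  have he : (0:ℝ) < Real.exp 1 := Real.exp_pos 1
  obtain ⟨L, hL⟩ : ∃ L, L = Real.log (1 / y) := ⟨_, rfl⟩
  rw [← hL] at hx
  have hlogy : Real.log y = -L := by
    rw [hL, one_div, Real.log_inv]; ring
  -- bounds on log 2
  have hlog2 : Real.log 2 < 0.6931472 := by
    have := Real.log_two_lt_d9; linarith
  have hlog2' : Real.log 2 > 0.6931471 := by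
    have := Real.log_two_gt_d9; linarith
  -- log r ≤ log 2 + (r/2 - 1)
  have hlogr_le : Real.log r ≤ Real.log 2 + (r/2 - 1) := by
    have h := Real.log_le_sub_one_of_pos (show (0:ℝ) < r/2 by linarith)
    have h2 : Real.log (r/2) = Real.log r - Real.log 2 :=
      Real.log_div (by linarith) (by norm_num)
    linarith
  -- L ≥ 2 - 2 log 2
  have hLlb : 2 - 2 * Real.log 2 ≤ L := by
    have h1 : Real.log y ≤ r * (Real.log r - 1) := by
      have h := Real.log_le_log hy0 hy
      rw [Real.log_rpow (by positivity), Real.log_div (by linarith) (ne_of_gt he),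
        Real.log_exp] at h
      linarith
    have h2 : 2 - 2*Real.log 2 ≤ r * (1 - Real.log r) := by
      nlinarith [hlogr_le, hlog2, hlog2', sq_nonneg (r-2)]
    nlinarith [h1]
  have hL0 : (0:ℝ) < L := by nlinarith
  -- the constant c = 15^(1/r)
  obtain ⟨c, hc⟩ : ∃ c, c = (15:ℝ) ^ (1/r) := ⟨_, rfl⟩
  have hcr : c ^ r = 15 := by
    rw [hc, ← Real.rpow_mul (by norm_num : (0:ℝ) ≤ 15), one_div,
      inv_mul_cancel₀ hr0.ne', Real.rpow_one]
  have hsqle : Real.sqrt 15 ≤ c := by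
    rw [hc, Real.sqrt_eq_rpow]
    apply Real.rpow_le_rpow_of_exponent_le (by norm_num)
    rw [div_le_div_iff₀ (by norm_num) hr0]
    linarith
  have hs15 : (3.8729:ℝ) < Real.sqrt 15 := by
    rw [show (3.8729:ℝ) = Real.sqrt (3.8729^2) from Real.sqrt_sq (by norm_num) |>.symm]
    exact Real.sqrt_lt_sqrt (by positivity) (by norm_num)
  have hc1 : (1:ℝ) < c := by linarith
  -- key: exp 1 ≤ c * (exp 1 - r)
  have her : r < Real.exp 1 := by
    have := Real.exp_one_gt_d9; linarith
  have hkey : Real.exp 1 ≤ c * (Real.exp 1 - r) := by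
    have h1 : Real.exp 1 ≤ Real.sqrt 15 * (Real.exp 1 - 2) := by
      nlinarith [Real.exp_one_gt_d9, Real.exp_one_lt_d9, hs15,
        Real.sq_sqrt (show (0:ℝ) ≤ 15 by norm_num)]
    nlinarith [hsqle, hr2, hs15, Real.exp_one_gt_d9]
  have ha0 : (0:ℝ) < r / (c-1) := div_pos hr0 (by linarith)
  -- tangent bound for log L
  have htan : r * Real.log L ≤ L*(c-1) - r + r * Real.log (r/(c-1)) := by
    have h := Real.log_le_sub_one_of_pos (show (0:ℝ) < L / (r/(c-1)) from div_pos hL0 ha0)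
    rw [Real.log_div hL0.ne' ha0.ne'] at h
    have heq : L / (r/(c-1)) = L * (c-1) / r := by
      field_simp
    rw [heq] at h
    have h2 := mul_le_mul_of_nonneg_left h hr0.le
    have h3 : r * (L * (c-1) / r - 1) = L*(c-1) - r := by
      field_simp
    nlinarith [h2, h3]
  -- log(r/(c-1)) + log c ≤ 1
  have hlog_a : Real.log (r/(c-1)) + Real.log c ≤ 1 := by
    have h1 : r/(c-1) * c ≤ Real.exp 1 := by
      rw [div_mul_eq_mul_div, div_le_iff₀ (by linarith : (0:ℝ) < c - 1)]
      nlinarith [hkey]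
    calc Real.log (r/(c-1)) + Real.log c
        = Real.log (r/(c-1) * c) := (Real.log_mul ha0.ne' (by linarith)).symm
      _ ≤ Real.log (Real.exp 1) := Real.log_le_log (by positivity) h1
      _ = 1 := Real.log_exp 1
  have hlog15 : Real.log 15 = r * Real.log c := by
    rw [hc, Real.log_rpow (by norm_num)]
    field_simp
  -- main scalar inequality
  have hmain : Real.log 15 + r * Real.log L + L ≤ c * L := by
    have h2 : r * (Real.log (r/(c-1)) + Real.log c) ≤ r * 1 :=
      mul_le_mul_of_nonneg_left hlog_a hr0.le
    linarith [htan, h2, hlog15]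
  -- positivity of x and of log x
  have hLr : (0:ℝ) < L ^ r := Real.rpow_pos_of_pos hL0 r
  have hx0 : (0:ℝ) < x := by rw [hx]; positivity
  have hlogx : Real.log x = Real.log 15 + r * Real.log L + L := by
    rw [hx, Real.log_div (by positivity) hy0.ne',
      Real.log_mul (by norm_num) hLr.ne', Real.log_rpow hL0, hlogy]
    ring
  have h15 : (2:ℝ) ≤ Real.log 15 := by
    rw [Real.le_log_iff_exp_le (by norm_num : (0:ℝ) < 15)]
    have h2 : Real.exp 2 = Real.exp 1 * Real.exp 1 := by
      rw [← Real.exp_add]; norm_num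
    nlinarith [Real.exp_one_lt_d9, Real.exp_one_gt_d9]
  have hlogx0 : (0:ℝ) ≤ Real.log x := by
    rw [hlogx]
    rcases le_or_gt 1 L with h | h
    · have : 0 ≤ Real.log L := Real.log_nonneg h
      nlinarith
    · have hlogL_neg : Real.log L ≤ 0 := Real.log_nonpos hL0.le h.le
      have hlb : 1 - 1/L ≤ Real.log L := by
        have h2 := Real.log_le_sub_one_of_pos (show (0:ℝ) < 1/L by positivity)
        rw [one_div, Real.log_inv] at h2
        rw [one_div]
        linarith
      have h3 : 2 * Real.log L ≤ r * Real.log L := by nlinarith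
      have h4 : 0.6 ≤ L := by nlinarith
      have h5 : 1 - 1/L ≥ 1 - 1/(0.6:ℝ) := by
        have : 1/L ≤ 1/(0.6:ℝ) := one_div_le_one_div_of_le (by norm_num) h4
        linarith
      nlinarith
  -- conclusion
  rw [div_le_iff₀ hx0]
  have hxy : y * x = 15 * L ^ r := by
    rw [hx, mul_comm, div_mul_cancel₀ _ hy0.ne']
  have hstep : Real.log x ≤ c * L := by rw [hlogx]; exact hmain
  calc (Real.log x) ^ r ≤ (c*L)^r := Real.rpow_le_rpow hlogx0 hstep hr0.le
    _ = c^r * L^r := Real.mul_rpow (by linarith) hL0.le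
    _ = 15 * L^r := by rw [hcr]
    _ = y * x := hxy.symm
end

section
/- Let p be a PMF on a finite alphabet Y and let p̂(n) be the empirical distribution of n i.i.d. samples from p. Then E[d_TV(p, p̂(n))] ≤ sqrt(2·ζ(p)·|Y| / n), where ζ(p) = 1 − ∑_{y∈Y} p(y)² and d_TV(p,q) = ∑_{y∈Y} |p(y) − q(y)|. -/
/-!
For each letter `y`, `n · p̂(n)(y)` is a sum of `n` independent Bernoulli(`p(y)`) indicators, so
`p̂(n)(y)` has mean `p(y)` and variance `p(y)(1 - p(y))/n`. The mean absolute deviation is at most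
the standard deviation (Jensen), and Cauchy–Schwarz over the `|Y|` letters bounds
`∑_y √(p(y)(1 - p(y))/n)` by `√(|Y| · ζ(p)/n)`, because `∑_y p(y)(1 - p(y)) = ζ(p)`.
-/

open MeasureTheory ProbabilityTheory Real

section MeanAbsoluteDeviation

variable {Ω : Type*} {mΩ : MeasurableSpace Ω} {μ : Measure Ω} [IsProbabilityMeasure μ]

theorem integral_abs_le_sqrt_integral_sq {W : Ω → ℝ} (hW : MemLp W 2 μ) :
    ∫ ω, |W ω| ∂μ ≤ √(∫ ω, W ω ^ 2 ∂μ) := by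
  refine le_sqrt_of_sq_le ?_
  have h := variance_nonneg |W| μ
  rw [variance_eq_sub hW.abs] at h
  simpa [sq_abs] using h

theorem integral_abs_sub_integral_le_sqrt_variance {X : Ω → ℝ} (hX : MemLp X 2 μ) :
    ∫ ω, |X ω - μ[X]| ∂μ ≤ √(Var[X; μ]) := by
  rw [variance_eq_integral hX.aemeasurable]
  exact integral_abs_le_sqrt_integral_sq (hX.sub (memLp_const _))

theorem measureReal_mul_one_sub_nonneg (s : Set Ω) : 0 ≤ μ.real s * (1 - μ.real s) :=
  mul_nonneg measureReal_nonneg (sub_nonneg.2 measureReal_le_one)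

theorem variance_indicator_one {s : Set Ω} (hs : MeasurableSet s) :
    Var[s.indicator 1; μ] = μ.real s * (1 - μ.real s) := by
  have hsq : s.indicator (1 : Ω → ℝ) ^ 2 = s.indicator 1 := by
    ext ω; by_cases h : ω ∈ s <;> simp [h]
  have hL2 : MemLp (s.indicator (1 : Ω → ℝ)) 2 μ :=
    memLp_indicator_const 2 hs 1 (Or.inr (measure_ne_top μ s))
  rw [variance_eq_sub hL2, hsq, integral_indicator_one hs]
  ring

end MeanAbsoluteDeviation

section EmpiricalFrequency

variable {α : Type*} {n : ℕ}

noncomputable def empiricalFreq (s : Set α) (ω : Fin n → α) : ℝ :=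
  (∑ ℓ, s.indicator 1 (ω ℓ)) / n

theorem empiricalFreq_eq_inv_mul (s : Set α) :
    empiricalFreq (n := n) s = fun ω => (n : ℝ)⁻¹ * ∑ ℓ, s.indicator 1 (ω ℓ) := by
  ext ω
  rw [empiricalFreq, div_eq_inv_mul]

variable [MeasurableSpace α] {ν : Measure α} [IsProbabilityMeasure ν] {s : Set α}

theorem memLp_indicator_one_eval (hs : MeasurableSet s) (ℓ : Fin n) :
    MemLp (fun ω : Fin n → α => s.indicator (1 : α → ℝ) (ω ℓ)) 2 (Measure.pi fun _ => ν) :=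
  (memLp_indicator_const 2 hs (1 : ℝ) (Or.inr (measure_ne_top ν s))).comp_measurePreserving
    (measurePreserving_eval _ ℓ)

theorem memLp_empiricalFreq (hs : MeasurableSet s) :
    MemLp (empiricalFreq (n := n) s) 2 (Measure.pi fun _ => ν) := by
  rw [empiricalFreq_eq_inv_mul]
  exact (memLp_finsetSum _ fun ℓ _ => memLp_indicator_one_eval hs ℓ).const_mul _

theorem integral_empiricalFreq (hn : n ≠ 0) (hs : MeasurableSet s) :
    ∫ ω, empiricalFreq s ω ∂(Measure.pi fun _ : Fin n => ν) = ν.real s := by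
  have heval (ℓ : Fin n) :
      ∫ ω, s.indicator 1 (ω ℓ) ∂(Measure.pi fun _ : Fin n => ν) = ν.real s := by
    rw [integral_comp_eval (stronglyMeasurable_const.indicator hs).aestronglyMeasurable,
      integral_indicator_one hs]
  rw [empiricalFreq_eq_inv_mul, integral_const_mul,
    integral_finsetSum _ fun ℓ _ => (memLp_indicator_one_eval hs ℓ).integrable one_le_two]
  simp only [heval, Finset.sum_const, Finset.card_univ, Fintype.card_fin, nsmul_eq_mul]
  field_simp

theorem variance_empiricalFreq (hs : MeasurableSet s) :
    Var[empiricalFreq (n := n) s; Measure.pi fun _ => ν] = ν.real s * (1 - ν.real s) / n := by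
  have hone : MemLp (s.indicator (1 : α → ℝ)) 2 ν :=
    memLp_indicator_const 2 hs 1 (Or.inr (measure_ne_top ν s))
  rw [empiricalFreq_eq_inv_mul, variance_const_mul, ← Finset.sum_fn,
    variance_sum_pi fun _ => hone, variance_indicator_one hs, Finset.sum_const,
    Finset.card_univ, Fintype.card_fin, nsmul_eq_mul]
  rcases eq_or_ne (n : ℝ) 0 with hn | hn
  · simp [hn]
  · field_simp

end EmpiricalFrequency

section FiniteAlphabet

variable {Y : Type*} [Fintype Y] [MeasurableSpace Y] [MeasurableSingletonClass Y]
  {ν : Measure Y} [IsProbabilityMeasure ν]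

theorem sum_measureReal_singleton_mul_one_sub :
    ∑ y, ν.real {y} * (1 - ν.real {y}) = 1 - ∑ y, ν.real {y} ^ 2 := by
  simp only [mul_one_sub, Finset.sum_sub_distrib, sum_measureReal_singleton, Finset.coe_univ,
    probReal_univ, sq]

theorem integral_sum_abs_sub_empiricalFreq_le {n : ℕ} (hn : n ≠ 0) :
    ∫ ω, ∑ y, |ν.real {y} - empiricalFreq {y} ω| ∂(Measure.pi fun _ : Fin n => ν)
      ≤ √(Fintype.card Y * (1 - ∑ y, ν.real {y} ^ 2) / n) := by
  have hmad (y : Y) : ∫ ω, |ν.real {y} - empiricalFreq {y} ω| ∂(Measure.pi fun _ : Fin n => ν)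
      ≤ √(ν.real {y} * (1 - ν.real {y}) / n) := by
    have hy := measurableSet_singleton y
    calc ∫ ω, |ν.real {y} - empiricalFreq {y} ω| ∂(Measure.pi fun _ : Fin n => ν)
        = ∫ ω, |empiricalFreq {y} ω - ∫ ω', empiricalFreq {y} ω' ∂(Measure.pi fun _ => ν)|
            ∂(Measure.pi fun _ : Fin n => ν) := by
          simp_rw [integral_empiricalFreq hn hy, abs_sub_comm]
      _ ≤ √(Var[empiricalFreq {y}; Measure.pi fun _ : Fin n => ν]) :=
          integral_abs_sub_integral_le_sqrt_variance (memLp_empiricalFreq hy)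
      _ = √(ν.real {y} * (1 - ν.real {y}) / n) := by rw [variance_empiricalFreq hy]
  rw [integral_finsetSum _ fun y _ => Integrable.of_finite]
  calc ∑ y, ∫ ω, |ν.real {y} - empiricalFreq {y} ω| ∂(Measure.pi fun _ : Fin n => ν)
      ≤ ∑ y, √1 * √(ν.real {y} * (1 - ν.real {y}) / n) := by
        simpa only [sqrt_one, one_mul] using Finset.sum_le_sum fun y _ => hmad y
    _ ≤ √(∑ _y : Y, 1) * √(∑ y, ν.real {y} * (1 - ν.real {y}) / n) :=
        sum_sqrt_mul_sqrt_le _ (fun _ => zero_le_one) fun y =>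
          div_nonneg (measureReal_mul_one_sub_nonneg {y}) n.cast_nonneg
    _ = √(Fintype.card Y * (1 - ∑ y, ν.real {y} ^ 2) / n) := by
        rw [← sqrt_mul (by positivity), ← Finset.sum_div, sum_measureReal_singleton_mul_one_sub,
          Finset.sum_const, Finset.card_univ, nsmul_one, mul_div_assoc]

end FiniteAlphabet

/-- Expected total-variation deviation of the empirical distribution:
`E[d_TV(p, p̂(n))] ≤ √(2·ζ(p)·|Y|/n)` where `ζ(p) = 1 − ∑_y p(y)²`. -/
theorem stmt_10 {Y : Type*} [Fintype Y] [DecidableEq Y] [MeasurableSpace Y]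
    [MeasurableSingletonClass Y] (p : PMF Y) (n : ℕ) (hn : 0 < n) :
    (∫ ω : Fin n → Y,
        (∑ y, |(p y).toReal - (∑ ℓ, if ω ℓ = y then (1 : ℝ) else 0) / n|)
        ∂(Measure.pi fun _ : Fin n => p.toMeasure))
      ≤ Real.sqrt (2 * (1 - ∑ y, ((p y).toReal) ^ 2) * (Fintype.card Y : ℝ) / n) := by
  have hp (y : Y) : (p y).toReal = p.toMeasure.real {y} := by
    rw [measureReal_def, p.toMeasure_apply_singleton y (measurableSet_singleton y)]
  have hfreq (ω : Fin n → Y) (y : Y) :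
      (∑ ℓ, if ω ℓ = y then (1 : ℝ) else 0) / n = empiricalFreq {y} ω := by
    simp only [empiricalFreq, Set.indicator_apply, Set.mem_singleton_iff, Pi.one_apply]
  have hζ : 0 ≤ 1 - ∑ y, p.toMeasure.real {y} ^ 2 := by
    rw [← sum_measureReal_singleton_mul_one_sub]
    exact Finset.sum_nonneg fun y _ => measureReal_mul_one_sub_nonneg {y}
  simp_rw [hp, hfreq]
  refine (integral_sum_abs_sub_empiricalFreq_le hn.ne').trans (sqrt_le_sqrt ?_)
  have hcard : (0 : ℝ) ≤ Fintype.card Y := Nat.cast_nonneg _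
  exact div_le_div_of_nonneg_right (by nlinarith [mul_nonneg hcard hζ]) n.cast_nonneg
end

section
/- Let P be a PMF on a countable alphabet whose support has size S(P), with every support probability at least 1/κ. Let Ŝ(n) be the number of distinct symbols among n i.i.d. samples. Then for any δ ∈ (0,1), with probability at least 1 − δ: Ŝ(n) ≤ S(P) ≤ (Ŝ(n) + sqrt((n/2)·log(1/δ)))·(1 − e^{−n/κ})^{−1}. -/
/-! Changing one sample moves the number `Ŝ` of distinct symbols by at most one, so McDiarmid's
inequality gives `P[E Ŝ - Ŝ ≥ ε] ≤ exp (-2ε²/n)`, which is `δ` for `ε = √((n/2) log (1/δ))`.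
A support symbol of mass at least `1/κ` is missed with probability at most
`(1 - 1/κ)ⁿ ≤ e^{-n/κ}`, so `E Ŝ ≥ S(P) (1 - e^{-n/κ})`. Almost surely every sample lies in the
support, so `Ŝ ≤ S(P)`. -/

open MeasureTheory ProbabilityTheory Real Finset
open scoped NNReal

def HasBoundedDifferences {ι γ : Type*} [DecidableEq ι] (c : ι → ℝ≥0) (f : (ι → γ) → ℝ) :
    Prop :=
  ∀ ω i y, |f (Function.update ω i y) - f ω| ≤ c i

lemma exists_forall_mem_Icc_of_abs_sub_le {γ : Type*} [Nonempty γ] {h : γ → ℝ} {c : ℝ}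
    (hh : ∀ y y', |h y - h y'| ≤ c) : ∃ a, ∀ y, h y ∈ Set.Icc a (a + c) := by
  obtain ⟨y₀⟩ := ‹Nonempty γ›
  have hbdd : BddBelow (Set.range h) :=
    ⟨h y₀ - c, by rintro _ ⟨y, rfl⟩; linarith [(abs_le.1 (hh y₀ y)).2]⟩
  refine ⟨⨅ y, h y, fun y ↦ ⟨ciInf_le hbdd y, ?_⟩⟩
  have : h y - c ≤ ⨅ y, h y := le_ciInf fun y' ↦ by linarith [(abs_le.1 (hh y y')).2]
  linarith

lemma measurable_comp_insertNth {α : Type*} [MeasurableSpace α] {n : ℕ}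
    {f : (Fin (n + 1) → α) → ℝ} (hf : Measurable f) (i : Fin (n + 1)) :
    Measurable fun p : α × (Fin n → α) ↦ f (i.insertNth p.1 p.2) :=
  hf.comp (MeasurableEquiv.piFinSuccAbove (fun _ ↦ α) i).symm.measurable

namespace HasBoundedDifferences

variable {α : Type*} {n : ℕ} {c : Fin (n + 1) → ℝ≥0} {f : (Fin (n + 1) → α) → ℝ}

lemma exists_forall_insertNth_mem_Icc [Nonempty α] (hbd : HasBoundedDifferences c f)
    (i : Fin (n + 1)) (ω : Fin n → α) : ∃ a : ℝ, ∀ y, f (i.insertNth y ω) ∈ Set.Icc a (a + c i) :=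
  exists_forall_mem_Icc_of_abs_sub_le fun y y' ↦ by simpa using hbd (i.insertNth y' ω) i y

variable [MeasurableSpace α] (μ : Measure α) [IsProbabilityMeasure μ]

lemma integrable_insertNth (hf : Measurable f) (hbd : HasBoundedDifferences c f)
    (i : Fin (n + 1)) (ω : Fin n → α) : Integrable (fun y ↦ f (i.insertNth y ω)) μ := by
  have := μ.nonempty_of_neZero
  obtain ⟨a, ha⟩ := hbd.exists_forall_insertNth_mem_Icc i ω
  exact Integrable.of_mem_Icc a (a + c i)
    ((measurable_comp_insertNth hf i).comp measurable_prodMk_right).aemeasurable (ae_of_all _ ha)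

lemma hasSubgaussianMGF_insertNth (hf : Measurable f) (hbd : HasBoundedDifferences c f)
    (i : Fin (n + 1)) (ω : Fin n → α) :
    HasSubgaussianMGF (fun y ↦ f (i.insertNth y ω) - ∫ y, f (i.insertNth y ω) ∂μ)
      ((c i / 2) ^ 2) μ := by
  have := μ.nonempty_of_neZero
  obtain ⟨a, ha⟩ := hbd.exists_forall_insertNth_mem_Icc i ω
  simpa using hasSubgaussianMGF_of_mem_Icc
    ((measurable_comp_insertNth hf i).comp measurable_prodMk_right).aemeasurable (ae_of_all _ ha)

lemma integral_insertNth (hf : Measurable f) (hbd : HasBoundedDifferences c f)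
    (i : Fin (n + 1)) :
    HasBoundedDifferences (fun j ↦ c (i.succAbove j)) fun ω ↦ ∫ y, f (i.insertNth y ω) ∂μ := by
  intro ω j z
  rw [← integral_sub (hbd.integrable_insertNth μ hf i _) (hbd.integrable_insertNth μ hf i _),
    ← Real.norm_eq_abs]
  refine (norm_integral_le_of_norm_le_const (C := c (i.succAbove j))
    (ae_of_all _ fun y ↦ ?_)).trans_eq (by simp)
  simpa using hbd (i.insertNth y ω) _ z

end HasBoundedDifferences

namespace ProbabilityTheory

lemma HasSubgaussianMGF.prod_add {α β : Type*} {mα : MeasurableSpace α}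
    {mβ : MeasurableSpace β} {μ : Measure α} {ν : Measure β} [IsProbabilityMeasure μ]
    [IsProbabilityMeasure ν] {X : α × β → ℝ} {Z : β → ℝ} {cX cZ : ℝ≥0}
    (hXm : AEStronglyMeasurable X (μ.prod ν))
    (hX : ∀ b, HasSubgaussianMGF (fun a ↦ X (a, b)) cX μ) (hZ : HasSubgaussianMGF Z cZ ν) :
    HasSubgaussianMGF (fun p ↦ X p + Z p.2) (cX + cZ) (μ.prod ν) := by
  have hsplit (t : ℝ) (a : α) (b : β) :
      exp (t * (X (a, b) + Z b)) = exp (t * Z b) * exp (t * X (a, b)) := by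
    rw [mul_add, exp_add, mul_comm]
  have hfiber (t : ℝ) (b : β) :
      ∫ a, exp (t * (X (a, b) + Z b)) ∂μ = exp (t * Z b) * mgf (fun a ↦ X (a, b)) μ t := by
    simp_rw [hsplit]
    exact integral_const_mul _ _
  have hfiber_le (t : ℝ) (b : β) :
      ∫ a, exp (t * (X (a, b) + Z b)) ∂μ ≤ exp (cX * t ^ 2 / 2) * exp (t * Z b) := by
    rw [hfiber, mul_comm]
    exact mul_le_mul_of_nonneg_right ((hX b).mgf_le t) (exp_nonneg _)
  have hint (t : ℝ) : Integrable (fun p ↦ exp (t * (X p + Z p.2))) (μ.prod ν) := by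
    have hm : AEStronglyMeasurable (fun p ↦ exp (t * (X p + Z p.2))) (μ.prod ν) :=
      continuous_exp.comp_aestronglyMeasurable
        ((hXm.add hZ.aestronglyMeasurable.comp_snd).const_mul t)
    refine (integrable_prod_iff' hm).2 ⟨ae_of_all _ fun b ↦ ?_, ?_⟩
    · simp_rw [hsplit]
      exact ((hX b).integrable_exp_mul t).const_mul _
    · refine ((hZ.integrable_exp_mul t).const_mul (exp (cX * t ^ 2 / 2))).mono'
        hm.norm.prod_swap.integral_prod_right' (ae_of_all _ fun b ↦ ?_)
      simp only [Real.norm_eq_abs, abs_exp]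
      rw [abs_of_nonneg (integral_nonneg fun _ ↦ exp_nonneg _)]
      exact hfiber_le t b
  refine ⟨hint, fun t ↦ ?_⟩
  calc mgf (fun p ↦ X p + Z p.2) (μ.prod ν) t
      = ∫ b, ∫ a, exp (t * (X (a, b) + Z b)) ∂μ ∂ν := integral_prod_symm _ (hint t)
    _ ≤ ∫ b, exp (cX * t ^ 2 / 2) * exp (t * Z b) ∂ν :=
        integral_mono_of_nonneg (ae_of_all _ fun _ ↦ integral_nonneg fun _ ↦ exp_nonneg _)
          ((hZ.integrable_exp_mul t).const_mul _) (ae_of_all _ (hfiber_le t))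
    _ = exp (cX * t ^ 2 / 2) * mgf Z ν t := integral_const_mul _ _
    _ ≤ exp (cX * t ^ 2 / 2) * exp (cZ * t ^ 2 / 2) :=
        mul_le_mul_of_nonneg_left (hZ.mgf_le t) (exp_nonneg _)
    _ = exp ((cX + cZ : ℝ≥0) * t ^ 2 / 2) := by
        rw [← exp_add]; push_cast; ring_nf

variable {α : Type*} [MeasurableSpace α]

/-- **McDiarmid's inequality**. -/
theorem hasSubgaussianMGF_sub_integral_of_hasBoundedDifferences {n : ℕ}
    {ν : Fin n → Measure α} [∀ i, IsProbabilityMeasure (ν i)] {c : Fin n → ℝ≥0}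
    {f : (Fin n → α) → ℝ} (hf : Measurable f) (hbd : HasBoundedDifferences c f) :
    HasSubgaussianMGF (fun ω ↦ f ω - (Measure.pi ν)[f]) (∑ i, (c i / 2) ^ 2)
      (Measure.pi ν) := by
  induction n with
  | zero =>
    have hconst : (fun ω ↦ f ω - (Measure.pi ν)[f]) = fun _ ↦ 0 := by
      ext ω
      rw [sub_eq_zero,
        show f = fun _ ↦ f ω from funext fun ω' ↦ congrArg f (Subsingleton.elim _ _)]
      simp
    rw [hconst, Fin.sum_univ_zero]
    exact .fun_zero
  | succ n ih =>
    -- Split off coordinate `0`: `f - E f = (f - g) + (g - E g)` with `g` the average of `f` over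
    -- that coordinate; Hoeffding's lemma bounds the first term fibrewise, `ih` the second.
    set e := MeasurableEquiv.piFinSuccAbove (fun _ : Fin (n + 1) ↦ α) 0
    set μ' := Measure.pi fun j ↦ ν ((0 : Fin (n + 1)).succAbove j)
    have he : MeasurePreserving e (Measure.pi ν) ((ν 0).prod μ') :=
      measurePreserving_piFinSuccAbove ν 0
    set g : (Fin n → α) → ℝ := fun ω ↦ ∫ y, f (Fin.insertNth 0 y ω) ∂ν 0
    have hF := measurable_comp_insertNth hf 0
    have hg : Measurable g := hF.stronglyMeasurable.integral_prod_left'.measurable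
    have hprod : HasSubgaussianMGF (fun p ↦ f (e.symm p) - μ'[g])
        ((c 0 / 2) ^ 2 + ∑ j, (c ((0 : Fin (n + 1)).succAbove j) / 2) ^ 2) ((ν 0).prod μ') :=
      (HasSubgaussianMGF.prod_add (hF.sub (hg.comp measurable_snd)).aestronglyMeasurable
        (hbd.hasSubgaussianMGF_insertNth (ν 0) hf 0)
        (ih (ν := fun j ↦ ν ((0 : Fin (n + 1)).succAbove j)) hg
          (hbd.integral_insertNth (ν 0) hf 0))).congr
        (ae_of_all _ fun _ ↦ sub_add_sub_cancel _ _ _)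
    have hmean : (Measure.pi ν)[f] = μ'[g] := by
      have hFint : Integrable (fun p ↦ f (e.symm p)) ((ν 0).prod μ') :=
        (hprod.integrable.add (integrable_const μ'[g])).congr
          (ae_of_all _ fun _ ↦ sub_add_cancel _ _)
      calc (Measure.pi ν)[f] = ∫ p, f (e.symm p) ∂(ν 0).prod μ' := by
            rw [← he.integral_comp']; simp
        _ = μ'[g] := integral_prod_symm _ hFint
    rw [Fin.sum_univ_succAbove _ 0, hmean]
    rw [← he.map_eq] at hprod
    simpa [Function.comp_def] using hprod.of_map he.measurable.aemeasurable

theorem measureReal_le_integral_sub_le_of_hasBoundedDifferences {n : ℕ}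
    {ν : Fin n → Measure α} [∀ i, IsProbabilityMeasure (ν i)] {c : Fin n → ℝ≥0}
    {f : (Fin n → α) → ℝ} (hf : Measurable f) (hbd : HasBoundedDifferences c f) {ε : ℝ}
    (hε : 0 ≤ ε) :
    (Measure.pi ν).real {ω | ε ≤ (Measure.pi ν)[f] - f ω}
      ≤ exp (-2 * ε ^ 2 / ∑ i, (c i : ℝ) ^ 2) := by
  have := (hasSubgaussianMGF_sub_integral_of_hasBoundedDifferences (ν := ν) hf hbd).neg
    |>.measure_ge_le hε
  simp only [Pi.neg_apply, neg_sub] at this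
  convert this using 2
  push_cast
  simp_rw [div_pow]
  rw [← sum_div]
  ring

end ProbabilityTheory

section DistinctValues

variable {ι γ : Type*} [Fintype ι]

lemma card_image_update_le [DecidableEq ι] [DecidableEq γ] (ω : ι → γ) (i : ι) (y : γ) :
    #(univ.image (Function.update ω i y)) ≤ #(univ.image ω) + 1 := by
  refine (card_le_card fun x hx ↦ ?_).trans (card_insert_le y _)
  obtain ⟨j, -, rfl⟩ := mem_image.1 hx
  rcases eq_or_ne j i with rfl | hj
  · simp
  · simp [Function.update_of_ne hj]

lemma hasBoundedDifferences_card_image [DecidableEq ι] [DecidableEq γ] :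
    HasBoundedDifferences (fun _ ↦ 1) (fun ω : ι → γ ↦ (#(univ.image ω) : ℝ)) := by
  intro ω i y
  have h₁ : (#(univ.image (Function.update ω i y)) : ℝ) ≤ #(univ.image ω) + 1 := by
    exact_mod_cast card_image_update_le ω i y
  have h₂ : (#(univ.image ω) : ℝ) ≤ #(univ.image (Function.update ω i y)) + 1 := by
    have := card_image_update_le (Function.update ω i y) i (ω i)
    rw [Function.update_idem, Function.update_eq_self] at this
    exact_mod_cast this
  rw [abs_le]
  constructor <;> push_cast <;> linarith

variable [MeasurableSpace γ] [MeasurableSingletonClass γ]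

lemma measureReal_pi_forall_ne (μ : Measure γ) [IsProbabilityMeasure μ] (a : γ) :
    (Measure.pi fun _ : ι ↦ μ).real {ω | ∀ i, ω i ≠ a} = (1 - μ.real {a}) ^ Fintype.card ι := by
  have : {ω : ι → γ | ∀ i, ω i ≠ a} = Set.univ.pi fun _ ↦ {a}ᶜ := by ext; simp
  rw [this, measureReal_def, Measure.pi_pi, prod_const, ENNReal.toReal_pow, card_univ,
    ← measureReal_def, probReal_compl_eq_one_sub (measurableSet_singleton a)]

lemma sum_one_sub_pow_le_integral_card_image [DecidableEq γ] [Countable γ] (μ : Measure γ)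
    [IsProbabilityMeasure μ] (T : Finset γ) :
    ∑ a ∈ T, (1 - (1 - μ.real {a}) ^ Fintype.card ι)
      ≤ ∫ ω, (#(univ.image ω) : ℝ) ∂(Measure.pi fun _ : ι ↦ μ) := by
  set μn := Measure.pi fun _ : ι ↦ μ
  have hmeas (a : γ) : MeasurableSet {ω : ι → γ | a ∈ univ.image ω} :=
    (Set.to_countable _).measurableSet
  have hhit (a : γ) : ∫ ω, {ω : ι → γ | a ∈ univ.image ω}.indicator 1 ω ∂μn
      = 1 - (1 - μ.real {a}) ^ Fintype.card ι := by
    have : {ω : ι → γ | ∀ i, ω i ≠ a} = {ω | a ∈ univ.image ω}ᶜ := by ext; simp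
    rw [integral_indicator_one (hmeas a), ← measureReal_pi_forall_ne, this,
      probReal_compl_eq_one_sub (hmeas a), sub_sub_cancel]
  have hint (a : γ) : Integrable ({ω : ι → γ | a ∈ univ.image ω}.indicator 1) μn :=
    (integrable_const (1 : ℝ)).indicator (hmeas a)
  calc ∑ a ∈ T, (1 - (1 - μ.real {a}) ^ Fintype.card ι)
      = ∫ ω, ∑ a ∈ T, {ω : ι → γ | a ∈ univ.image ω}.indicator 1 ω ∂μn := by
        rw [integral_finsetSum T fun a _ ↦ hint a]
        exact sum_congr rfl fun a _ ↦ (hhit a).symm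
    _ ≤ ∫ ω, (#(univ.image ω) : ℝ) ∂μn := by
        refine integral_mono (integrable_finsetSum T fun a _ ↦ hint a) ?_ fun ω ↦ ?_
        · refine Integrable.of_mem_Icc 0 (Fintype.card ι) (measurable_of_countable _).aemeasurable
            (ae_of_all _ fun ω ↦ ⟨by positivity, ?_⟩)
          exact_mod_cast card_image_le.trans card_univ.le
        · simp only [Set.indicator_apply, Pi.one_apply, sum_boole]
          exact_mod_cast card_le_card fun x hx ↦ (mem_filter.1 hx).2

end DistinctValues

lemma one_sub_pow_le_exp_neg_mul {s t : ℝ} (N : ℕ) (hst : s ≤ t) (ht : t ≤ 1) :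
    (1 - t) ^ N ≤ exp (-(N * s)) :=
  calc (1 - t) ^ N ≤ exp (-t) ^ N := pow_le_pow_left₀ (sub_nonneg.2 ht) (one_sub_le_exp_neg t) N
    _ = exp (-(N * t)) := by rw [← exp_nat_mul, mul_neg]
    _ ≤ exp (-(N * s)) := exp_le_exp.2 (neg_le_neg (by gcongr))

lemma card_support_mul_le_integral_card_image {ι γ : Type*} [Fintype ι] [DecidableEq γ]
    [Countable γ] [MeasurableSpace γ] [MeasurableSingletonClass γ] (p : PMF γ)
    (hfin : p.support.Finite) {κ : ℝ} (hmin : ∀ a ∈ p.support, 1 / κ ≤ (p a).toReal) :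
    (#hfin.toFinset : ℝ) * (1 - exp (-(Fintype.card ι : ℝ) / κ))
      ≤ ∫ ω, (#(univ.image ω) : ℝ) ∂(Measure.pi fun _ : ι ↦ p.toMeasure) := by
  refine le_trans ?_ (sum_one_sub_pow_le_integral_card_image p.toMeasure hfin.toFinset)
  rw [← nsmul_eq_mul, ← sum_const]
  refine sum_le_sum fun a ha ↦ sub_le_sub_left ?_ 1
  rw [measureReal_def, p.toMeasure_apply_singleton a (measurableSet_singleton a), neg_div,
    div_eq_mul_one_div]
  exact one_sub_pow_le_exp_neg_mul _ (hmin a (hfin.mem_toFinset.1 ha))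
    (ENNReal.toReal_le_of_le_ofReal zero_le_one (by simpa using p.coe_le_one a))

lemma PMF.ae_pi_forall_mem_support {ι γ : Type*} [Fintype ι] [MeasurableSpace γ]
    [MeasurableSingletonClass γ] (p : PMF γ) :
    ∀ᵐ ω ∂(Measure.pi fun _ : ι ↦ p.toMeasure), ∀ i, ω i ∈ p.support := by
  have : ∀ᵐ a ∂p.toMeasure, a ∈ p.support := by
    rw [← p.restrict_toMeasure_support]
    exact ae_restrict_mem p.support_countable.measurableSet
  exact ae_all_iff.2 fun i ↦ Measure.tendsto_eval_ae_ae.eventually this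

lemma measureReal_sqrt_le_integral_sub_card_image_le {γ : Type*} [DecidableEq γ] [Countable γ]
    [MeasurableSpace γ] [MeasurableSingletonClass γ] (μ : Measure γ) [IsProbabilityMeasure μ]
    {n : ℕ} (hn : 0 < n) {δ : ℝ} (hδ0 : 0 < δ) (hδ1 : δ ≤ 1) :
    (Measure.pi fun _ : Fin n ↦ μ).real {ω | √(n / 2 * log (1 / δ))
      ≤ (Measure.pi fun _ : Fin n ↦ μ)[fun ω ↦ (#(univ.image ω) : ℝ)] - #(univ.image ω)} ≤ δ := by
  have hε : √(n / 2 * log (1 / δ)) ^ 2 = n / 2 * log (1 / δ) :=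
    sq_sqrt (mul_nonneg (by positivity) (log_nonneg (by rw [le_div_iff₀ hδ0]; linarith)))
  convert measureReal_le_integral_sub_le_of_hasBoundedDifferences (ν := fun _ ↦ μ)
    (measurable_of_countable _) hasBoundedDifferences_card_image (sqrt_nonneg _)
  rw [hε, one_div, log_inv]
  simp only [NNReal.coe_one, one_pow, sum_const, card_univ, Fintype.card_fin, nsmul_eq_mul,
    mul_one]
  rw [show -2 * (n / 2 * -log δ) / n = log δ by field_simp, exp_log hδ0]

/-- Confidence interval for the support size: with probability at least `1 − δ`,
`Ŝ(n) ≤ S(P) ≤ (Ŝ(n) + √((n/2)·log(1/δ)))·(1 − e^{−n/κ})⁻¹`. -/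
theorem stmt_17 {Y : Type*} [Countable Y] [DecidableEq Y] [MeasurableSpace Y]
    [MeasurableSingletonClass Y] (p : PMF Y) (hfin : p.support.Finite)
    (κ : ℝ) (hκ : 1 ≤ κ) (hmin : ∀ a ∈ p.support, 1 / κ ≤ (p a).toReal)
    (n : ℕ) (hn : 0 < n) (δ : ℝ) (hδ0 : 0 < δ) (hδ1 : δ < 1) :
    1 - δ ≤
      ((Measure.pi fun _ : Fin n => p.toMeasure)
        {ω : Fin n → Y |
          (Finset.univ.image ω).card ≤ hfin.toFinset.card
          ∧ (hfin.toFinset.card : ℝ)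
              ≤ (((Finset.univ.image ω).card : ℝ)
                    + Real.sqrt ((n / 2) * Real.log (1 / δ)))
                  * (1 - Real.exp (-(n : ℝ) / κ))⁻¹}).toReal := by
  set μ := Measure.pi fun _ : Fin n ↦ p.toMeasure
  set ε := √(n / 2 * log (1 / δ))
  set q := exp (-(n : ℝ) / κ)
  have hq : q < 1 := exp_lt_one_iff.2 (div_neg_of_neg_of_pos (by simpa using hn) (by linarith))
  have hmean : (#hfin.toFinset : ℝ) * (1 - q) ≤ μ[fun ω ↦ (#(univ.image ω) : ℝ)] := by
    simpa using card_support_mul_le_integral_card_image (ι := Fin n) p hfin hmin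
  set B := {ω : Fin n → Y | ε ≤ μ[fun ω ↦ (#(univ.image ω) : ℝ)] - #(univ.image ω)}
  have hgood : Bᶜ ≤ᵐ[μ] {ω | #(univ.image ω) ≤ #hfin.toFinset
      ∧ (#hfin.toFinset : ℝ) ≤ (#(univ.image ω) + ε) * (1 - q)⁻¹} := by
    filter_upwards [p.ae_pi_forall_mem_support] with ω hω hB
    refine ⟨card_le_card fun a ha ↦ ?_, ?_⟩
    · obtain ⟨i, -, rfl⟩ := mem_image.1 ha
      exact hfin.mem_toFinset.2 (hω i)
    · rw [← div_eq_mul_inv, le_div_iff₀ (sub_pos.2 hq)]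
      linarith [not_le.1 hB]
  have hB : MeasurableSet B := measurableSet_le measurable_const (measurable_of_countable _)
  calc 1 - δ ≤ 1 - μ.real B := by
        linarith [measureReal_sqrt_le_integral_sub_card_image_le p.toMeasure hn hδ0 hδ1.le]
    _ = μ.real Bᶜ := (probReal_compl_eq_one_sub hB).symm
    _ ≤ _ := ENNReal.toReal_mono (measure_ne_top _ _) (measure_mono_ae hgood)
end
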